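/- With the setup of a product operator $K$ with factor bounds $\|K_j g\|_{L^{r_j}}\le C_j\|g\|_{L^{p_j}}$: if $p_1\le r_2$ (no other conditions needed beyond positivity of all exponents), then $\|Kf\|_{L^{(r_1,r_2)}_{\mu_1\times\mu_2}}\le C_1C_2\|f\|_{L^{(p_2,p_1)}_{\lambda_2\times\lambda_1}}$ for all nonnegative measurable $f$ on $T_1\times T_2$. -/

import Mathlib

/-!
Writing `g x₂ t₁ = ∫ k₂(x₂, t₂) f(t₁, t₂) dλ₂`, the inner integral of `Kf` is `K₁(g x₂)`. The bound
for `K₁` at each fixed `x₂` controls the left side by `C₁ ‖g‖` in the mixed norm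
`L^{r₂}_{x₂} L^{p₁}_{t₁}`. Since `p₁ ≤ r₂`, Minkowski's integral inequality (for the exponent
`r₂ / p₁ ≥ 1`) lets the two norms be swapped, and the bound for `K₂` at each fixed `t₁` bounds
`‖g‖` in `L^{p₁}_{t₁} L^{r₂}_{x₂}` by `C₂ ‖f‖_{L^{(p₂, p₁)}}`.
-/

open MeasureTheory ENNReal Function

namespace ENNReal

lemma le_rpow_of_le_rpow_mul {a b : ℝ≥0∞} {p q : ℝ} (hpq : p.HolderConjugate q) (ha : a ≠ ∞)
    (h : a ≤ a ^ (1 / q) * b) : a ≤ b ^ p := by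
  rcases eq_or_ne a 0 with rfl | ha0
  · exact zero_le
  have hq0 : a ^ (1 / q) ≠ 0 := (rpow_pos (pos_iff_ne_zero.2 ha0) ha).ne'
  have hqtop : a ^ (1 / q) ≠ ∞ := rpow_ne_top_of_nonneg hpq.symm.one_div_nonneg ha
  have hp : a ^ (1 / p) ≤ b := by
    refine (ENNReal.mul_le_mul_iff_right hq0 hqtop).1 (le_trans (le_of_eq ?_) h)
    rw [← rpow_add _ _ ha0 ha, add_comm, hpq.one_div_add_one_div, div_one, rpow_one]
  rw [one_div] at hp
  exact (rpow_inv_le_iff hpq.pos).1 hp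

lemma rpow_div_le_mul_rpow_div {a b c : ℝ≥0∞} {p r s : ℝ} (hs : 0 ≤ s)
    (h : a ^ (1 / r) ≤ c * b ^ (1 / p)) : a ^ (s / r) ≤ c ^ s * b ^ (s / p) :=
  calc a ^ (s / r) = (a ^ (1 / r)) ^ s := by rw [← rpow_mul, one_div_mul_eq_div]
    _ ≤ (c * b ^ (1 / p)) ^ s := rpow_le_rpow h hs
    _ = c ^ s * b ^ (s / p) := by rw [mul_rpow_of_nonneg _ _ hs, ← rpow_mul, one_div_mul_eq_div]

end ENNReal

section

variable {X : Type*} [MeasurableSpace X] {μ : Measure X}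

lemma lintegral_const_rpow_mul_rpow_one_div {r : ℝ} (hr : 0 < r) (c : ℝ≥0∞) {h : X → ℝ≥0∞}
    (hh : Measurable h) :
    (∫⁻ x, c ^ r * h x ∂μ) ^ (1 / r) = c * (∫⁻ x, h x ∂μ) ^ (1 / r) := by
  rw [lintegral_const_mul _ hh, mul_rpow_of_nonneg _ _ (one_div_nonneg.2 hr.le), ← rpow_mul,
    mul_one_div_cancel hr.ne', rpow_one]

lemma lintegral_le_of_forall_lintegral_ne_top_le [SigmaFinite μ] {f : X → ℝ≥0∞}
    (hf : Measurable f) {R : ℝ≥0∞}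
    (h : ∀ g : X → ℝ≥0∞, Measurable g → g ≤ f → ∫⁻ x, g x ∂μ ≠ ∞ → ∫⁻ x, g x ∂μ ≤ R) :
    ∫⁻ x, f x ∂μ ≤ R := by
  refine lintegral_le_of_forall_fin_meas_le R fun s hs hμs => ?_
  have hsup : ∀ x, ⨆ n : ℕ, min (f x) n = f x := fun x => by
    rw [← inf_iSup_eq, iSup_natCast, inf_top_eq]
  calc ∫⁻ x in s, f x ∂μ = ⨆ n : ℕ, ∫⁻ x in s, min (f x) n ∂μ := by
        simp_rw [← lintegral_iSup (fun n => hf.min measurable_const)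
          (fun m n hmn x => min_le_min_left _ (Nat.cast_le.2 hmn)), hsup]
    _ ≤ R := iSup_le fun n => by
        rw [← lintegral_indicator hs]
        refine h _ ((hf.min measurable_const).indicator hs)
          (fun x => (Set.indicator_le_self _ _ x).trans (min_le_left _ _)) ?_
        have hle : s.indicator (fun y => min (f y) n) ≤ s.indicator fun _ => (n : ℝ≥0∞) :=
          fun x => Set.indicator_le_indicator (min_le_right _ _)
        refine ne_top_of_le_ne_top ?_ (lintegral_mono hle)
        rw [lintegral_indicator_const hs]
        exact mul_ne_top (natCast_ne_top n) hμs

namespace ENNReal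

variable {T : Type*} [MeasurableSpace T] {lam : Measure T} {F : X → T → ℝ≥0∞}

lemma lintegral_mul_lintegral_le_Lp_mul_lintegral_Lq [SFinite μ] [SFinite lam] {p q : ℝ}
    (hpq : p.HolderConjugate q) {u : X → ℝ≥0∞} (hu : Measurable u) (hF : Measurable (uncurry F)) :
    ∫⁻ x, u x * ∫⁻ t, F x t ∂lam ∂μ
      ≤ (∫⁻ x, u x ^ p ∂μ) ^ (1 / p) * ∫⁻ t, (∫⁻ x, F x t ^ q ∂μ) ^ (1 / q) ∂lam :=
  calc ∫⁻ x, u x * ∫⁻ t, F x t ∂lam ∂μ = ∫⁻ t, ∫⁻ x, u x * F x t ∂μ ∂lam := by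
        simp_rw [← lintegral_const_mul _ hF.of_uncurry_left]
        exact lintegral_lintegral_swap ((hu.comp measurable_fst).mul hF).aemeasurable
    _ ≤ ∫⁻ t, (∫⁻ x, u x ^ p ∂μ) ^ (1 / p) * (∫⁻ x, F x t ^ q ∂μ) ^ (1 / q) ∂lam :=
        lintegral_mono fun t => lintegral_mul_le_Lp_mul_Lq μ hpq hu.aemeasurable
          (hF.comp measurable_prodMk_right).aemeasurable
    _ = _ := lintegral_const_mul _ ((hF.pow_const q).lintegral_prod_left.pow_const _)

/-- Minkowski's integral inequality. -/
theorem lintegral_Lp_lintegral_le [SigmaFinite μ] [SFinite lam] (hF : Measurable (uncurry F))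
    {s : ℝ} (hs : 1 ≤ s) :
    (∫⁻ x, (∫⁻ t, F x t ∂lam) ^ s ∂μ) ^ (1 / s)
      ≤ ∫⁻ t, (∫⁻ x, F x t ^ s ∂μ) ^ (1 / s) ∂lam := by
  rcases hs.eq_or_lt with rfl | hs_gt
  · simpa using (lintegral_lintegral_swap hF.aemeasurable).le
  have hsq := Real.HolderConjugate.conjExponent hs_gt
  set q := s.conjExponent
  set R := ∫⁻ t, (∫⁻ x, F x t ^ s ∂μ) ^ (1 / s) ∂lam
  rw [one_div, rpow_inv_le_iff hsq.pos]
  -- Since `∫ H` is finite, the factor `(∫ H) ^ (1 / q)` that Hölder produces can be cancelled.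
  refine lintegral_le_of_forall_lintegral_ne_top_le (hF.lintegral_prod_right'.pow_const s)
    fun H hH hHG hH_ne_top => le_rpow_of_le_rpow_mul hsq hH_ne_top ?_
  set K := fun x => H x ^ s⁻¹
  have hKs : ∀ x, K x ^ s = H x := fun x => rpow_inv_rpow hsq.ne_zero _
  have hKF : ∀ x, K x ≤ ∫⁻ t, F x t ∂lam := fun x => (rpow_inv_le_iff hsq.pos).2 (hHG x)
  calc ∫⁻ x, H x ∂μ = ∫⁻ x, K x ^ (s - 1) * K x ∂μ := by
        refine lintegral_congr fun x => ?_
        rw [← hKs x]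
        nth_rewrite 1 [← sub_add_cancel s 1]
        rw [rpow_add_of_nonneg _ _ hsq.sub_one_pos.le zero_le_one, rpow_one]
    _ ≤ ∫⁻ x, K x ^ (s - 1) * ∫⁻ t, F x t ∂lam ∂μ := lintegral_mono fun x => by gcongr; exact hKF x
    _ ≤ (∫⁻ x, (K x ^ (s - 1)) ^ q ∂μ) ^ (1 / q) * R :=
        lintegral_mul_lintegral_le_Lp_mul_lintegral_Lq hsq.symm ((hH.pow_const _).pow_const _) hF
    _ = (∫⁻ x, H x ∂μ) ^ (1 / q) * R := by simp_rw [← rpow_mul, hsq.sub_one_mul_conj, hKs]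

theorem lintegral_mixed_Lp_swap_le [SigmaFinite μ] [SFinite lam] (hF : Measurable (uncurry F))
    {p r : ℝ} (hp : 0 < p) (hpr : p ≤ r) :
    (∫⁻ x, (∫⁻ t, F x t ^ p ∂lam) ^ (r / p) ∂μ) ^ (1 / r)
      ≤ (∫⁻ t, (∫⁻ x, F x t ^ r ∂μ) ^ (p / r) ∂lam) ^ (1 / p) := by
  have h := lintegral_Lp_lintegral_le (μ := μ) (lam := lam) (F := fun x t => F x t ^ p)
    (hF.pow_const p) ((one_le_div hp).2 hpr)
  simp_rw [← rpow_mul, mul_div_cancel₀ _ hp.ne', one_div_div] at h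
  calc (∫⁻ x, (∫⁻ t, F x t ^ p ∂lam) ^ (r / p) ∂μ) ^ (1 / r)
      = ((∫⁻ x, (∫⁻ t, F x t ^ p ∂lam) ^ (r / p) ∂μ) ^ (p / r)) ^ (1 / p) := by
        rw [← rpow_mul]
        field_simp
    _ ≤ _ := by gcongr

end ENNReal

end

lemma lintegral_prod_mul_mul {T₁ T₂ : Type*} [MeasurableSpace T₁] [MeasurableSpace T₂]
    {lam₁ : Measure T₁} {lam₂ : Measure T₂} [SFinite lam₂] {a : T₁ → ℝ≥0∞} {b : T₂ → ℝ≥0∞}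
    {f : T₁ × T₂ → ℝ≥0∞} (ha : Measurable a) (hb : Measurable b) (hf : Measurable f) :
    ∫⁻ t, a t.1 * b t.2 * f t ∂lam₁.prod lam₂
      = ∫⁻ t₁, a t₁ * ∫⁻ t₂, b t₂ * f (t₁, t₂) ∂lam₂ ∂lam₁ := by
  rw [lintegral_prod (fun t => a t.1 * b t.2 * f t) (by fun_prop)]
  refine lintegral_congr fun t₁ => ?_
  rw [← lintegral_const_mul _ (by fun_prop)]
  simp only [mul_assoc]

theorem product_operator_permuted_case_p1_le_r2_general
    {T1 T2 X1 X2 : Type*} [MeasurableSpace T1] [MeasurableSpace T2]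
    [MeasurableSpace X1] [MeasurableSpace X2]
    (lam1 : Measure T1) (lam2 : Measure T2) (mu1 : Measure X1) (mu2 : Measure X2)
    [SigmaFinite lam1] [SigmaFinite lam2] [SigmaFinite mu2]
    (k1 : X1 → T1 → ℝ≥0∞) (k2 : X2 → T2 → ℝ≥0∞)
    (hk1 : Measurable fun p : X1 × T1 => k1 p.1 p.2)
    (hk2 : Measurable fun p : X2 × T2 => k2 p.1 p.2)
    (p1 p2 r1 r2 : ℝ) (C1 C2 : ℝ≥0∞)
    (hp1 : 0 < p1) (hr2 : 0 < r2)
    (hpr : p1 ≤ r2)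
    (hK1 : ∀ g : T1 → ℝ≥0∞, Measurable g →
      (∫⁻ x, (∫⁻ t, k1 x t * g t ∂lam1) ^ r1 ∂mu1) ^ (1 / r1)
        ≤ C1 * (∫⁻ t, g t ^ p1 ∂lam1) ^ (1 / p1))
    (hK2 : ∀ g : T2 → ℝ≥0∞, Measurable g →
      (∫⁻ x, (∫⁻ t, k2 x t * g t ∂lam2) ^ r2 ∂mu2) ^ (1 / r2)
        ≤ C2 * (∫⁻ t, g t ^ p2 ∂lam2) ^ (1 / p2))
    (f : T1 × T2 → ℝ≥0∞) (hf : Measurable f) :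
    (∫⁻ x2, (∫⁻ x1,
        (∫⁻ t, k1 x1 t.1 * k2 x2 t.2 * f t ∂(lam1.prod lam2)) ^ r1 ∂mu1) ^ (r2 / r1)
      ∂mu2) ^ (1 / r2)
      ≤ C1 * C2 *
        (∫⁻ t1, (∫⁻ t2, f (t1, t2) ^ p2 ∂lam2) ^ (p1 / p2) ∂lam1) ^ (1 / p1) := by
  set g : X2 → T1 → ℝ≥0∞ := fun x2 t1 => ∫⁻ t2, k2 x2 t2 * f (t1, t2) ∂lam2
  have hg : Measurable (uncurry g) := Measurable.lintegral_prod_right'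
    (f := fun q : (X2 × T1) × T2 => k2 q.1.1 q.2 * f (q.1.2, q.2)) (by fun_prop)
  have hK1g : ∀ x2, (∫⁻ x1, (∫⁻ t1, k1 x1 t1 * g x2 t1 ∂lam1) ^ r1 ∂mu1) ^ (r2 / r1)
      ≤ C1 ^ r2 * (∫⁻ t1, g x2 t1 ^ p1 ∂lam1) ^ (r2 / p1) := fun x2 =>
    rpow_div_le_mul_rpow_div hr2.le (hK1 _ hg.of_uncurry_left)
  have hK2f : ∀ t1, (∫⁻ x2, g x2 t1 ^ r2 ∂mu2) ^ (p1 / r2)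
      ≤ C2 ^ p1 * (∫⁻ t2, f (t1, t2) ^ p2 ∂lam2) ^ (p1 / p2) := fun t1 =>
    rpow_div_le_mul_rpow_div hp1.le (hK2 _ (hf.comp measurable_prodMk_left))
  simp_rw [lintegral_prod_mul_mul hk1.of_uncurry_left hk2.of_uncurry_left hf]
  calc _ ≤ (∫⁻ x2, C1 ^ r2 * (∫⁻ t1, g x2 t1 ^ p1 ∂lam1) ^ (r2 / p1) ∂mu2) ^ (1 / r2) := by
        gcongr with x2
        exact hK1g x2
    _ = C1 * (∫⁻ x2, (∫⁻ t1, g x2 t1 ^ p1 ∂lam1) ^ (r2 / p1) ∂mu2) ^ (1 / r2) :=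
        lintegral_const_rpow_mul_rpow_one_div hr2 _
          ((hg.pow_const p1).lintegral_prod_right'.pow_const _)
    _ ≤ C1 * (∫⁻ t1, (∫⁻ x2, g x2 t1 ^ r2 ∂mu2) ^ (p1 / r2) ∂lam1) ^ (1 / p1) := by
        gcongr
        exact lintegral_mixed_Lp_swap_le hg hp1 hpr
    _ ≤ C1 * (∫⁻ t1, C2 ^ p1 * (∫⁻ t2, f (t1, t2) ^ p2 ∂lam2) ^ (p1 / p2) ∂lam1) ^ (1 / p1) := by
        gcongr with t1
        exact hK2f t1
    _ = C1 * C2 * (∫⁻ t1, (∫⁻ t2, f (t1, t2) ^ p2 ∂lam2) ^ (p1 / p2) ∂lam1) ^ (1 / p1) := by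
        rw [lintegral_const_rpow_mul_rpow_one_div hp1 _
          ((hf.pow_const p2).lintegral_prod_right'.pow_const _), mul_assoc]

theorem product_operator_permuted_case_p1_le_r2
    {T1 T2 X1 X2 : Type*} [MeasurableSpace T1] [MeasurableSpace T2]
    [MeasurableSpace X1] [MeasurableSpace X2]
    (lam1 : Measure T1) (lam2 : Measure T2) (mu1 : Measure X1) (mu2 : Measure X2)
    [SigmaFinite lam1] [SigmaFinite lam2] [SigmaFinite mu1] [SigmaFinite mu2]
    (k1 : X1 → T1 → ℝ≥0∞) (k2 : X2 → T2 → ℝ≥0∞)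
    (hk1 : Measurable fun p : X1 × T1 => k1 p.1 p.2)
    (hk2 : Measurable fun p : X2 × T2 => k2 p.1 p.2)
    (p1 p2 r1 r2 : ℝ) (C1 C2 : ℝ≥0∞)
    (hp1 : 0 < p1) (hp2 : 0 < p2) (hr1 : 0 < r1) (hr2 : 0 < r2)
    (hpr : p1 ≤ r2)
    (hK1 : ∀ g : T1 → ℝ≥0∞, Measurable g →
      (∫⁻ x, (∫⁻ t, k1 x t * g t ∂lam1) ^ r1 ∂mu1) ^ (1 / r1)
        ≤ C1 * (∫⁻ t, g t ^ p1 ∂lam1) ^ (1 / p1))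
    (hK2 : ∀ g : T2 → ℝ≥0∞, Measurable g →
      (∫⁻ x, (∫⁻ t, k2 x t * g t ∂lam2) ^ r2 ∂mu2) ^ (1 / r2)
        ≤ C2 * (∫⁻ t, g t ^ p2 ∂lam2) ^ (1 / p2))
    (f : T1 × T2 → ℝ≥0∞) (hf : Measurable f) :
    (∫⁻ x2, (∫⁻ x1,
        (∫⁻ t, k1 x1 t.1 * k2 x2 t.2 * f t ∂(lam1.prod lam2)) ^ r1 ∂mu1) ^ (r2 / r1)
      ∂mu2) ^ (1 / r2)
      ≤ C1 * C2 *
        (∫⁻ t1, (∫⁻ t2, f (t1, t2) ^ p2 ∂lam2) ^ (p1 / p2) ∂lam1) ^ (1 / p1) :=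
  product_operator_permuted_case_p1_le_r2_general lam1 lam2 mu1 mu2 k1 k2 hk1 hk2 p1 p2 r1 r2 C1 C2
    hp1 hr2 hpr hK1 hK2 f hf
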